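/- arXiv:1512.05808 — 2 statements merged into one kernel-verified Lean document; each statement's English description precedes it below -/
import Mathlib

section
/- If σ ∈ ℂ with σ ≠ 1 is an eigenvalue of the complexification of G, i.e., there exists a nonzero z ∈ ℂ^p with Gz = σz, then |σ| < 1. -/
/-!
Write `l = zᴴ L z` and `d = zᴴ D z > 0`; since `XᵀX` is symmetric, `U = Lᵀ` and `zᴴ U z = conj l`.
Multiplying `(L + D) G z = σ (L + D) z = -U z` by `zᴴ` gives `σ (l + d) = -conj l`, and positive
semidefiniteness of `XᵀX = L + D + Lᵀ` gives `q = 2 Re l + d ≥ 0`. As `|l + d|² = |l|² + d q`,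
`|σ| < 1` when `q > 0`, while `q = 0` means `l + d = -conj l ≠ 0`, which forces `σ = 1`.
-/

open Matrix
open scoped ComplexConjugate ComplexOrder

namespace Complex

theorem norm_lt_one_of_mul_add_eq_neg_conj {σ l d : ℂ} (hd : 0 < d) (hq : 0 ≤ l + d + conj l)
    (hσ : σ ≠ 1) (h : σ * (l + d) = -conj l) : ‖σ‖ < 1 := by
  obtain ⟨hd_re, hd_im⟩ := pos_iff.1 hd
  have hq_re : 0 ≤ 2 * l.re + d.re := by
    have := (nonneg_iff.1 hq).1
    simp only [add_re, conj_re] at this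
    linarith
  rcases hq_re.eq_or_lt with hq0 | hq_pos
  · have hs : l + d = -conj l := by
      apply ext
      · simp only [add_re, neg_re, conj_re]
        linarith
      · simp only [add_im, neg_im, conj_im, neg_neg]
        linarith
    have hs0 : l + d ≠ 0 := fun h0 => by
      have := congrArg re h0
      rw [add_re, zero_re] at this
      linarith
    exact (hσ (mul_right_cancel₀ hs0 (by rw [h, one_mul, hs]))).elim
  · have hnormSq : normSq (l + d) = normSq l + d.re * (2 * l.re + d.re) := by
      simp only [normSq_apply, add_re, add_im, ← hd_im]
      ring
    have hlt : ‖l‖ < ‖l + d‖ := by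
      rw [← sq_lt_sq₀ (norm_nonneg _) (norm_nonneg _), Complex.sq_norm, Complex.sq_norm, hnormSq]
      nlinarith
    have hσs : ‖σ‖ * ‖l + d‖ = ‖l‖ := by rw [← norm_mul, h, norm_neg, norm_conj]
    exact (mul_lt_iff_lt_one_left ((norm_nonneg l).trans_lt hlt)).1 (hσs ▸ hlt)

end Complex

namespace Matrix

section TriangularSplitting

variable {ι R : Type*} [LinearOrder ι] {A L D U : Matrix ι ι R}

theorem add_add_eq_of_triangular_split [AddZeroClass R]
    (hL : ∀ i j, L i j = if j < i then A i j else 0)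
    (hD : ∀ i j, D i j = if i = j then A i j else 0)
    (hU : ∀ i j, U i j = if i < j then A i j else 0) : L + D + U = A := by
  ext i j
  rcases lt_trichotomy i j with h | rfl | h
  · simp [hL, hD, hU, h, h.ne, h.not_gt]
  · simp [hL, hD, hU]
  · simp [hL, hD, hU, h, h.ne', h.not_gt]

theorem eq_transpose_of_triangular_split [Zero R] (hA : A.IsSymm)
    (hL : ∀ i j, L i j = if j < i then A i j else 0)
    (hU : ∀ i j, U i j = if i < j then A i j else 0) : U = Lᵀ := by
  ext i j
  rw [transpose_apply, hU, hL, hA.apply]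

theorem eq_diagonal_diag_of_triangular_split [Zero R]
    (hD : ∀ i j, D i j = if i = j then A i j else 0) : D = diagonal A.diag := by
  ext i j
  rw [hD, diagonal_apply]
  split_ifs with h <;> simp [h]

theorem det_add_eq_prod_diag_of_triangular_split [Fintype ι] [CommRing R]
    (hL : ∀ i j, L i j = if j < i then A i j else 0)
    (hD : ∀ i j, D i j = if i = j then A i j else 0) : (L + D).det = ∏ i, A i i := by
  refine (det_of_isLowerTriangular _ fun i j (hij : i < j) => ?_).trans (by simp [hL, hD])
  simp [hL, hD, hij.not_gt, hij.ne]

end TriangularSplitting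

theorem transpose_mul_self_apply_self_pos {m n R : Type*} [Fintype m] [CommRing R]
    [LinearOrder R] [IsStrictOrderedRing R] {X : Matrix m n R} {i : n} (hi : Xᵀ i ≠ 0) :
    0 < (Xᵀ * X) i i := by
  rw [mul_apply']
  exact lt_of_le_of_ne (Finset.sum_nonneg fun k _ => mul_self_nonneg _)
    (Ne.symm (dotProduct_self_eq_zero.not.2 hi))

theorem norm_lt_one_of_gaussSeidel_eigenvector {ι : Type*} [Fintype ι] {L D : Matrix ι ι ℂ}
    (hA : (L + D + Lᴴ).PosSemidef) (hD : D.PosDef) {σ : ℂ} (hσ : σ ≠ 1) {z : ι → ℂ}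
    (hz : z ≠ 0) (h : σ • ((L + D) *ᵥ z) = -(Lᴴ *ᵥ z)) : ‖σ‖ < 1 := by
  have hLH : star z ⬝ᵥ (Lᴴ *ᵥ z) = conj (star z ⬝ᵥ (L *ᵥ z)) := by
    rw [← Complex.star_def, star_dotProduct, star_mulVec, conjTranspose_conjTranspose,
      dotProduct_mulVec]
  refine Complex.norm_lt_one_of_mul_add_eq_neg_conj (l := star z ⬝ᵥ (L *ᵥ z))
    (hD.dotProduct_mulVec_pos hz) ?_ hσ ?_
  · simpa only [add_mulVec, dotProduct_add, hLH] using hA.dotProduct_mulVec_nonneg z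
  · simpa only [dotProduct_smul, dotProduct_neg, add_mulVec, dotProduct_add, hLH, smul_eq_mul]
      using congrArg (star z ⬝ᵥ ·) h

theorem conjTranspose_map_ofReal {m n : Type*} (M : Matrix m n ℝ) :
    (M.map Complex.ofRealHom)ᴴ = Mᵀ.map Complex.ofRealHom := by
  rw [← conjTranspose_eq_transpose_of_trivial, conjTranspose_map _ fun r => by simp]

end Matrix

/-- If σ ∈ ℂ with σ ≠ 1 is an eigenvalue of the complexification
of G = −(L+D)⁻¹U, i.e. there exists a nonzero z ∈ ℂ^p with Gz = σz, then
|σ| < 1. -/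
theorem stmt_5 {n p : ℕ} (X : Matrix (Fin n) (Fin p) ℝ)
    (hX : ∀ i : Fin p, Xᵀ i ≠ 0)
    (L D U G : Matrix (Fin p) (Fin p) ℝ)
    (hL : ∀ i j, L i j = if j < i then (Xᵀ * X) i j else 0)
    (hD : ∀ i j, D i j = if i = j then (Xᵀ * X) i j else 0)
    (hU : ∀ i j, U i j = if i < j then (Xᵀ * X) i j else 0)
    (hG : G = -((L + D)⁻¹ * U))
    (σ : ℂ) (hσ : σ ≠ 1) (z : Fin p → ℂ) (hz : z ≠ 0)
    (heig : (G.map (fun r : ℝ => (r : ℂ))).mulVec z = σ • z) :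
    ‖σ‖ < 1 := by
  have hdiag : ∀ i, 0 < (Xᵀ * X) i i := fun i => transpose_mul_self_apply_self_pos (hX i)
  have hUL : U = Lᵀ :=
    eq_transpose_of_triangular_split (by rw [IsSymm, transpose_mul, transpose_transpose]) hL hU
  have hdet : IsUnit (L + D).det := by
    rw [det_add_eq_prod_diag_of_triangular_split hL hD]
    exact (Finset.prod_pos fun i _ => hdiag i).ne'.isUnit
  have hLDG : (L + D) * G = -U := by rw [hG, mul_neg, mul_nonsing_inv_cancel_left _ _ hdet]
  change G.map Complex.ofRealHom *ᵥ z = σ • z at heig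
  refine norm_lt_one_of_gaussSeidel_eigenvector (L := L.map Complex.ofRealHom)
    (D := D.map Complex.ofRealHom) ?_ ?_ hσ hz ?_
  · rw [conjTranspose_map_ofReal, ← hUL, ← Matrix.map_add _ (map_add _),
      ← Matrix.map_add _ (map_add _), add_add_eq_of_triangular_split hL hD hU, Matrix.map_mul,
      ← conjTranspose_map_ofReal]
    exact posSemidef_conjTranspose_mul_self _
  · rw [eq_diagonal_diag_of_triangular_split hD, diagonal_map (map_zero _), posDef_diagonal_iff]
    exact fun i => Complex.zero_lt_real.2 (hdiag i)
  · rw [conjTranspose_map_ofReal, ← hUL, ← mulVec_smul, ← heig, mulVec_mulVec,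
      ← Matrix.map_add _ (map_add _), ← Matrix.map_mul, hLDG, Matrix.map_neg _ (map_neg _),
      neg_mulVec]
end

section
/- If β ∈ ℝ^p satisfies ‖x_i‖₂² β_i = S(x_iᵀy − Σ_{j≠i} x_iᵀx_j β_j, λ) for every coordinate i (i.e., β is a fixed point of every single-coordinate descent update), then β minimizes f over ℝ^p. -/
open Matrix BigOperators

/-- The shrinkage (soft-thresholding) function. -/
noncomputable def shrink (x lam : ℝ) : ℝ :=
  if x > lam then x - lam else if x < -lam then x + lam else 0

lemma shrink_key (a c lam b t : ℝ) (ha : 0 < a) (hlam : 0 ≤ lam)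
    (h : a * b = shrink c lam) :
    0 ≤ (a * b - c) * (t - b) + lam * (|t| - |b|) := by
  unfold shrink at h
  split_ifs at h with h1 h2
  · have hb : 0 < b := by nlinarith
    have h' : a * b - c = -lam := by linarith
    rw [abs_of_pos hb, h']
    nlinarith [mul_nonneg hlam (sub_nonneg.mpr (le_abs_self t))]
  · have hb : b < 0 := by nlinarith
    have h' : a * b - c = lam := by linarith
    rw [abs_of_neg hb, h']
    nlinarith [mul_nonneg hlam (show (0:ℝ) ≤ t + |t| by linarith [neg_abs_le t])]
  · push_neg at h1 h2
    have hb : b = 0 := by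
      rcases mul_eq_zero.mp h with h' | h'
      · exact absurd h' (ne_of_gt ha)
      · exact h'
    subst hb
    simp only [abs_zero, mul_zero, zero_mul, sub_zero, zero_sub]
    nlinarith [le_abs_self (c * t), abs_mul c t,
      mul_le_mul_of_nonneg_right (abs_le.mpr ⟨h2, h1⟩) (abs_nonneg t)]

/-- If β ∈ ℝ^p satisfies
‖x_i‖₂² β_i = S(x_iᵀy − Σ_{j≠i} x_iᵀx_j β_j, λ) for every coordinate i
(i.e., β is a fixed point of every single-coordinate descent update), then
β minimizes f over ℝ^p. -/
theorem stmt_9 {n p : ℕ} (X : Matrix (Fin n) (Fin p) ℝ) (y : Fin n → ℝ)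
    (lam : ℝ) (hlam : 0 ≤ lam)
    (hX : ∀ i : Fin p, Xᵀ i ≠ 0)
    (f : (Fin p → ℝ) → ℝ)
    (hf : ∀ β, f β = (1 / 2) * ∑ k, (X.mulVec β k - y k) ^ 2 + lam * ∑ i, |β i|)
    (β : Fin p → ℝ)
    (hfix : ∀ i : Fin p, (∑ k, (X k i) ^ 2) * β i =
      shrink (∑ k, X k i * y k -
        ∑ j ∈ Finset.univ.erase i, (Xᵀ * X) i j * β j) lam) :
    ∀ β' : Fin p → ℝ, f β ≤ f β' := by
  intro β'
  set u : Fin n → ℝ := fun k => X.mulVec β k - y k with hu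
  set d : Fin n → ℝ := fun k => X.mulVec β' k - X.mulVec β k with hdd
  set a : Fin p → ℝ := fun i => ∑ k, (X k i) ^ 2 with haa
  set c : Fin p → ℝ := fun i => ∑ k, X k i * y k -
      ∑ j ∈ Finset.univ.erase i, (Xᵀ * X) i j * β j with hcc
  have ha : ∀ i, 0 < a i := by
    intro i
    have hex : ∃ k, X k i ≠ 0 := by
      by_contra hcon
      push_neg at hcon
      exact hX i (funext fun k => hcon k)
    obtain ⟨k0, hk0⟩ := hex
    exact Finset.sum_pos' (fun k _ => sq_nonneg _)
      ⟨k0, Finset.mem_univ _, by positivity⟩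
  have hXtX : ∀ i j, (Xᵀ * X) i j = ∑ k, X k i * X k j := by
    intro i j
    simp [Matrix.mul_apply, Matrix.transpose_apply]
  -- gradient expression
  have hg : ∀ i, a i * β i - c i = ∑ k, X k i * u k := by
    intro i
    have hdiag : (Xᵀ * X) i i = a i := by
      rw [hXtX]; simp [haa, sq]
    have hsplit : ∑ j, (Xᵀ * X) i j * β j =
        a i * β i + ∑ j ∈ Finset.univ.erase i, (Xᵀ * X) i j * β j := by
      rw [← Finset.add_sum_erase _ _ (Finset.mem_univ i), hdiag]
    have hXu : ∑ k, X k i * u k = ∑ j, (Xᵀ * X) i j * β j - ∑ k, X k i * y k := by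
      simp only [hu, Matrix.mulVec, dotProduct, mul_sub, Finset.mul_sum]
      rw [Finset.sum_sub_distrib, Finset.sum_comm]
      congr 1
      refine Finset.sum_congr rfl fun j _ => ?_
      rw [hXtX, Finset.sum_mul]
      exact Finset.sum_congr rfl fun k _ => by ring
    rw [hXu, hsplit, hcc]
    ring
  -- cross term identity
  have hcross : ∑ k, u k * d k = ∑ i, (β' i - β i) * (a i * β i - c i) := by
    have hdk : ∀ k, d k = ∑ i, X k i * (β' i - β i) := by
      intro k
      simp only [hdd, Matrix.mulVec, dotProduct]
      rw [← Finset.sum_sub_distrib]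
      exact Finset.sum_congr rfl fun i _ => by ring
    calc ∑ k, u k * d k = ∑ k, ∑ i, (β' i - β i) * (X k i * u k) := by
          refine Finset.sum_congr rfl fun k _ => ?_
          rw [hdk k, Finset.mul_sum]
          exact Finset.sum_congr rfl fun i _ => by ring
      _ = ∑ i, ∑ k, (β' i - β i) * (X k i * u k) := Finset.sum_comm
      _ = ∑ i, (β' i - β i) * ∑ k, X k i * u k :=
          Finset.sum_congr rfl fun i _ => (Finset.mul_sum _ _ _).symm
      _ = ∑ i, (β' i - β i) * (a i * β i - c i) :=
          Finset.sum_congr rfl fun i _ => by rw [hg i]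
  -- decomposition of f β' - f β
  have h1 : ∑ k, (X.mulVec β' k - y k) ^ 2 =
      ∑ k, (u k) ^ 2 + 2 * (∑ k, u k * d k) + ∑ k, (d k) ^ 2 := by
    rw [Finset.mul_sum, ← Finset.sum_add_distrib, ← Finset.sum_add_distrib]
    refine Finset.sum_congr rfl fun k _ => ?_
    have hk : X.mulVec β' k - y k = u k + d k := by simp [hu, hdd]
    rw [hk]; ring
  have h2 : ∑ k, (X.mulVec β k - y k) ^ 2 = ∑ k, (u k) ^ 2 := rfl
  have hS1 : ∑ i, ((a i * β i - c i) * (β' i - β i) + lam * (|β' i| - |β i|)) =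
      (∑ k, u k * d k) + (lam * ∑ i, |β' i| - lam * ∑ i, |β i|) := by
    rw [Finset.sum_add_distrib, hcross]
    congr 1
    · exact Finset.sum_congr rfl fun i _ => by ring
    · rw [Finset.mul_sum, Finset.mul_sum, ← Finset.sum_sub_distrib]
      exact Finset.sum_congr rfl fun i _ => by ring
  have hterm : ∀ i, 0 ≤ (a i * β i - c i) * (β' i - β i) + lam * (|β' i| - |β i|) :=
    fun i => shrink_key (a i) (c i) lam (β i) (β' i) (ha i) hlam (hfix i)
  have hpos1 : 0 ≤ ∑ i, ((a i * β i - c i) * (β' i - β i) + lam * (|β' i| - |β i|)) :=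
    Finset.sum_nonneg fun i _ => hterm i
  have hpos2 : 0 ≤ ∑ k, (d k) ^ 2 := Finset.sum_nonneg fun k _ => sq_nonneg _
  rw [hf β', hf β, h1, h2]
  linarith [hS1]
end
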